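/- Joining the UBCS scheme is Pareto-improving compared with the user equilibrium without policy intervention: if T_UE is a real number with T_UE ≥ Σ_{h=1}^{n} ρ_h·T_h, then for every path i and every real β with β_{i−1} ≤ β ≤ β_i we have T_i·β + P_i ≤ T_UE·β. (Second part of Theorem 2; T_UE is the common travel time of all users at user equilibrium.) -/

import Mathlib

/-!
Write `Δ_g = T_{g-1} - T_g ≥ 0` for the travel-time drops. A user of path `i` with value of
time `b ∈ [β_{i-1}, β_i]` is charged by every `h < i` the drops `Δ_g`, `h < g ≤ i`, weighted by
`β_{g-1} ≤ b`, and is paid by every `h > i` the drops `Δ_g`, `i < g ≤ h`, weighted by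
`β_{g-1} ≥ b`. Since the drops telescope, both bounds say that the `h`-th term of `P_i` is at
most `ρ_h (T_h - T_i) b`, so `T_i b + P_i ≤ (∑ ρ_h T_h) b ≤ T_UE b`.
-/

open Finset

def ubcsPayment (n : ℕ) (T β ρ : ℕ → ℝ) (i : ℕ) : ℝ :=
  ∑ h ∈ Icc 1 (i - 1), ρ h * ∑ g ∈ Icc (h + 1) i, (T (g - 1) - T g) * β (g - 1)
    - ∑ h ∈ Icc (i + 1) n, ρ h * ∑ g ∈ Icc (i + 1) h, (T (g - 1) - T g) * β (g - 1)

theorem sum_Icc_eq_sum_Ico_add_add_sum_Ioc {M : Type*} [AddCommMonoid M] (f : ℕ → M)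
    {a i n : ℕ} (hai : a ≤ i) (hin : i ≤ n) :
    ∑ h ∈ Icc a n, f h = ∑ h ∈ Ico a i, f h + f i + ∑ h ∈ Ioc i n, f h := by
  rw [← Ico_add_one_right_eq_Icc, ← sum_Ico_consecutive f hai (by omega : i ≤ n + 1),
    Ico_add_one_right_eq_Icc, ← add_sum_Ioc_eq_sum_Icc hin, add_assoc]

theorem sum_Icc_add_one_sub_telescope {M : Type*} [AddCommGroup M] (T : ℕ → M) {a c : ℕ}
    (hac : a ≤ c) : ∑ g ∈ Icc (a + 1) c, (T (g - 1) - T g) = T a - T c := by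
  induction c, hac using Nat.le_induction with
  | base => simp
  | succ c hac ih =>
    rw [Icc_add_one_left_eq_Ioc, sum_Ioc_succ_top hac, ← Icc_add_one_left_eq_Ioc, ih,
      Nat.add_sub_cancel]
    abel

section WeightedDrops

variable {T w : ℕ → ℝ} {a c : ℕ} {b : ℝ}

theorem sum_drop_mul_le (hac : a ≤ c) (hT : AntitoneOn T (Set.Icc a c))
    (hw : ∀ g ∈ Ico a c, w g ≤ b) :
    ∑ g ∈ Icc (a + 1) c, (T (g - 1) - T g) * w (g - 1) ≤ (T a - T c) * b := by
  calc ∑ g ∈ Icc (a + 1) c, (T (g - 1) - T g) * w (g - 1)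
      ≤ ∑ g ∈ Icc (a + 1) c, (T (g - 1) - T g) * b := by
        refine sum_le_sum fun g hg => ?_
        rw [mem_Icc] at hg
        refine mul_le_mul_of_nonneg_left (hw _ (mem_Ico.2 ⟨by omega, by omega⟩)) ?_
        exact sub_nonneg.2 (hT ⟨by omega, by omega⟩ ⟨by omega, hg.2⟩ (by omega))
    _ = (T a - T c) * b := by rw [← sum_mul, sum_Icc_add_one_sub_telescope T hac]

theorem le_sum_drop_mul (hac : a ≤ c) (hT : AntitoneOn T (Set.Icc a c))
    (hw : ∀ g ∈ Ico a c, b ≤ w g) :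
    (T a - T c) * b ≤ ∑ g ∈ Icc (a + 1) c, (T (g - 1) - T g) * w (g - 1) := by
  calc (T a - T c) * b = ∑ g ∈ Icc (a + 1) c, (T (g - 1) - T g) * b := by
        rw [← sum_mul, sum_Icc_add_one_sub_telescope T hac]
    _ ≤ ∑ g ∈ Icc (a + 1) c, (T (g - 1) - T g) * w (g - 1) := by
        refine sum_le_sum fun g hg => ?_
        rw [mem_Icc] at hg
        refine mul_le_mul_of_nonneg_left (hw _ (mem_Ico.2 ⟨by omega, by omega⟩)) ?_
        exact sub_nonneg.2 (hT ⟨by omega, by omega⟩ ⟨by omega, hg.2⟩ (by omega))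

end WeightedDrops

theorem sum_mul_sub_mul_eq {ι : Type*} (s : Finset ι) (ρ T : ι → ℝ) (t b : ℝ)
    (hρ : ∑ h ∈ s, ρ h = 1) :
    ∑ h ∈ s, ρ h * ((T h - t) * b) = (∑ h ∈ s, ρ h * T h) * b - t * b := by
  have hterm : ∀ h ∈ s, ρ h * ((T h - t) * b) = ρ h * T h * b - ρ h * (t * b) :=
    fun h _ => by ring
  rw [sum_congr rfl hterm, sum_sub_distrib, ← sum_mul, ← sum_mul, hρ, one_mul]

theorem ubcsPayment_le {n i : ℕ} {T β ρ : ℕ → ℝ} {b : ℝ}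
    (hT : AntitoneOn T (Set.Icc 1 n)) (hβ : MonotoneOn β (Set.Icc 1 n))
    (hρ : ∀ h ∈ Icc 1 n, 0 ≤ ρ h) (hi : i ∈ Icc 1 n) (hb : b ∈ Set.Icc (β (i - 1)) (β i)) :
    ubcsPayment n T β ρ i ≤ ∑ h ∈ Icc 1 n, ρ h * ((T h - T i) * b) := by
  rw [mem_Icc] at hi
  have charged : ∀ h ∈ Ico 1 i, ρ h * ∑ g ∈ Icc (h + 1) i, (T (g - 1) - T g) * β (g - 1)
      ≤ ρ h * ((T h - T i) * b) := by
    intro h hh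
    rw [mem_Ico] at hh
    refine mul_le_mul_of_nonneg_left (sum_drop_mul_le hh.2.le ?_ fun g hg => ?_)
      (hρ h (mem_Icc.2 ⟨hh.1, by omega⟩))
    · exact hT.mono (Set.Icc_subset_Icc hh.1 hi.2)
    · rw [mem_Ico] at hg
      exact (hβ ⟨by omega, by omega⟩ ⟨by omega, by omega⟩ (by omega)).trans hb.1
  have paid : ∀ h ∈ Ioc i n, -(ρ h * ∑ g ∈ Icc (i + 1) h, (T (g - 1) - T g) * β (g - 1))
      ≤ ρ h * ((T h - T i) * b) := by
    intro h hh
    rw [mem_Ioc] at hh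
    rw [neg_le, ← mul_neg, ← neg_mul, neg_sub]
    refine mul_le_mul_of_nonneg_left (le_sum_drop_mul hh.1.le ?_ fun g hg => ?_)
      (hρ h (mem_Icc.2 ⟨by omega, hh.2⟩))
    · exact hT.mono (Set.Icc_subset_Icc hi.1 hh.2)
    · rw [mem_Ico] at hg
      exact hb.2.trans (hβ ⟨hi.1, by omega⟩ ⟨by omega, by omega⟩ hg.1)
  have hcharged := sum_le_sum charged
  have hpaid := sum_le_sum paid
  rw [sum_neg_distrib] at hpaid
  have hIco : Icc 1 (i - 1) = Ico 1 i := by ext; simp only [mem_Icc, mem_Ico]; omega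
  rw [ubcsPayment, hIco, Icc_add_one_left_eq_Ioc i n,
    sum_Icc_eq_sum_Ico_add_add_sum_Ioc _ hi.1 hi.2, sub_self, zero_mul, mul_zero, add_zero]
  linarith

theorem ubcs_pareto_vs_ue_general
    (n : ℕ)
    (T β ρ P : ℕ → ℝ)
    (hT : ∀ i j, 1 ≤ i → i ≤ j → j ≤ n → T j ≤ T i)
    (hβ0 : 0 ≤ β 0)
    (hβ : ∀ i j, i ≤ j → j ≤ n → β i ≤ β j)
    (hρ : ∀ i, 1 ≤ i → i ≤ n → 0 ≤ ρ i)
    (hρ1 : ∑ h ∈ Icc 1 n, ρ h = 1)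
    (hP : ∀ i, 1 ≤ i → i ≤ n →
      P i = ∑ h ∈ Icc 1 (i - 1), ρ h * ∑ g ∈ Icc (h + 1) i, (T (g - 1) - T g) * β (g - 1)
          - ∑ h ∈ Icc (i + 1) n, ρ h * ∑ g ∈ Icc (i + 1) h, (T (g - 1) - T g) * β (g - 1))
    (TUE : ℝ) (hTUE : ∑ h ∈ Icc 1 n, ρ h * T h ≤ TUE) :
    ∀ i, 1 ≤ i → i ≤ n → ∀ b : ℝ, β (i - 1) ≤ b → b ≤ β i →
      T i * b + P i ≤ TUE * b := by
  intro i hi1 hin b hbl hbr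
  have hTanti : AntitoneOn T (Set.Icc 1 n) := fun j hj k hk hjk => hT j k hj.1 hjk hk.2
  have hβmono : MonotoneOn β (Set.Icc 1 n) := fun j _ k hk hjk => hβ j k hjk hk.2
  have hb0 : 0 ≤ b := hβ0.trans ((hβ 0 (i - 1) (Nat.zero_le _) (by omega)).trans hbl)
  have hpay : P i ≤ (∑ h ∈ Icc 1 n, ρ h * T h) * b - T i * b := by
    rw [hP i hi1 hin, ← sum_mul_sub_mul_eq _ ρ T _ _ hρ1]
    exact ubcsPayment_le hTanti hβmono
      (fun h hh => hρ h (mem_Icc.1 hh).1 (mem_Icc.1 hh).2) (mem_Icc.2 ⟨hi1, hin⟩) ⟨hbl, hbr⟩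
  linarith [mul_le_mul_of_nonneg_right hTUE hb0]

/-- Second part of Theorem 2: joining the UBCS scheme is Pareto-improving compared with
the user equilibrium without policy intervention. -/
theorem ubcs_pareto_vs_ue
    (n : ℕ) (hn : 1 ≤ n)
    (T β ρ P : ℕ → ℝ)
    (hT : ∀ i j, 1 ≤ i → i ≤ j → j ≤ n → T j ≤ T i)
    (hβ0 : 0 ≤ β 0)
    (hβ : ∀ i j, i ≤ j → j ≤ n → β i ≤ β j)
    (hρ : ∀ i, 1 ≤ i → i ≤ n → 0 ≤ ρ i)
    (hρ1 : ∑ h ∈ Icc 1 n, ρ h = 1)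
    (hP : ∀ i, 1 ≤ i → i ≤ n →
      P i = ∑ h ∈ Icc 1 (i - 1), ρ h * ∑ g ∈ Icc (h + 1) i, (T (g - 1) - T g) * β (g - 1)
          - ∑ h ∈ Icc (i + 1) n, ρ h * ∑ g ∈ Icc (i + 1) h, (T (g - 1) - T g) * β (g - 1))
    (TUE : ℝ) (hTUE : ∑ h ∈ Icc 1 n, ρ h * T h ≤ TUE) :
    ∀ i, 1 ≤ i → i ≤ n → ∀ b : ℝ, β (i - 1) ≤ b → b ≤ β i →
      T i * b + P i ≤ TUE * b :=
  ubcs_pareto_vs_ue_general n T β ρ P hT hβ0 hβ hρ hρ1 hP TUE hTUE
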